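/- Let n ≥ 3 and let a(x) = (ε² + |x|²)^{1/2} for ε > 0. Then the bi-Laplacian satisfies -ΔΔa(x) = (n-1)(n-3)/(ε² + |x|²)^{3/2} + 6(n-3)ε²/(ε² + |x|²)^{5/2} + 15ε⁴/(ε² + |x|²)^{7/2}, which is nonnegative for every x ∈ ℝⁿ. -/

import Mathlib

open MeasureTheory

/-- The Laplacian of a function on `ℝⁿ`, expressed as the sum of second partial
derivatives along the coordinate directions. -/
noncomputable def laplacian {n : ℕ} (f : EuclideanSpace ℝ (Fin n) → ℝ)
    (x : EuclideanSpace ℝ (Fin n)) : ℝ :=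
  ∑ i : Fin n,
    fderiv ℝ (fun y => fderiv ℝ f y (EuclideanSpace.single i 1)) x
      (EuclideanSpace.single i 1)

lemma lap_formula {n : ℕ} (φ φd φdd : ℝ → ℝ)
    (h1 : ∀ t, 0 ≤ t → HasDerivAt φ (φd t) t)
    (h2 : ∀ t, 0 ≤ t → HasDerivAt φd (φdd t) t)
    (x : EuclideanSpace ℝ (Fin n)) :
    laplacian (fun y => φ (‖y‖ ^ 2)) x
      = 4 * φdd (‖x‖ ^ 2) * ‖x‖ ^ 2 + 2 * n * φd (‖x‖ ^ 2) := by
  have inner_fderiv : ∀ (y : EuclideanSpace ℝ (Fin n)) (i : Fin n),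
      fderiv ℝ (fun z => φ (‖z‖ ^ 2)) y (EuclideanSpace.single i 1)
        = 2 * φd (‖y‖ ^ 2) * y i := by
    intro y i
    have key : HasFDerivAt (fun z : EuclideanSpace ℝ (Fin n) => φ (‖z‖ ^ 2))
        ((φd (‖y‖ ^ 2)) • ((2 : ℕ) • (innerSL ℝ y))) y :=
      (h1 _ (by positivity)).comp_hasFDerivAt y (hasStrictFDerivAt_norm_sq y).hasFDerivAt
    rw [key.fderiv]
    simp [real_inner_comm, EuclideanSpace.inner_single_left, EuclideanSpace.inner_single_right]
    ring
  have key2 : ∀ i : Fin n,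
      fderiv ℝ (fun z => fderiv ℝ (fun z' => φ (‖z'‖ ^ 2)) z (EuclideanSpace.single i 1)) x
          (EuclideanSpace.single i 1)
        = 2 * φd (‖x‖ ^ 2) + 4 * φdd (‖x‖ ^ 2) * (x i) ^ 2 := by
    intro i
    have hfun : (fun z => fderiv ℝ (fun z' => φ (‖z'‖ ^ 2)) z (EuclideanSpace.single i 1))
        = fun z : EuclideanSpace ℝ (Fin n) => 2 * (φd (‖z‖ ^ 2) * z i) := by
      funext z; rw [inner_fderiv z i]; ring
    rw [hfun]
    have hA : HasFDerivAt (fun z : EuclideanSpace ℝ (Fin n) => φd (‖z‖ ^ 2))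
        ((φdd (‖x‖ ^ 2)) • ((2 : ℕ) • (innerSL ℝ x))) x :=
      (h2 _ (by positivity)).comp_hasFDerivAt x (hasStrictFDerivAt_norm_sq x).hasFDerivAt
    have hB : HasFDerivAt (fun z : EuclideanSpace ℝ (Fin n) => z i)
        (EuclideanSpace.proj (𝕜 := ℝ) i) x := (EuclideanSpace.proj (𝕜 := ℝ) i).hasFDerivAt
    rw [HasFDerivAt.fderiv (f := fun z : EuclideanSpace ℝ (Fin n) => 2 * (φd (‖z‖ ^ 2) * z i))
      ((hA.mul hB).const_mul (2 : ℝ))]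
    simp [real_inner_comm, EuclideanSpace.inner_single_left, EuclideanSpace.inner_single_right]
    ring
  have hsum : ∑ i : Fin n, (x i) ^ 2 = ‖x‖ ^ 2 := by
    rw [EuclideanSpace.norm_eq, Real.sq_sqrt (by positivity)]
    simp [sq_abs]
  unfold laplacian
  simp_rw [key2]
  rw [Finset.sum_add_distrib, Finset.sum_const, ← Finset.mul_sum, hsum]
  simp [Finset.card_univ]
  ring

noncomputable def phi0 (ε t : ℝ) : ℝ := (ε ^ 2 + t) ^ ((1:ℝ)/2)
noncomputable def phi1 (ε t : ℝ) : ℝ := 1/2 * (ε ^ 2 + t) ^ (-((1:ℝ)/2))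
noncomputable def phi2 (ε t : ℝ) : ℝ := -(1/4) * (ε ^ 2 + t) ^ (-((3:ℝ)/2))
noncomputable def psi0 (n : ℕ) (ε t : ℝ) : ℝ := 4 * phi2 ε t * t + 2 * n * phi1 ε t
noncomputable def psi1 (n : ℕ) (ε t : ℝ) : ℝ :=
  -((ε ^ 2 + t) ^ (-((3:ℝ)/2))) + 3/2 * t * (ε ^ 2 + t) ^ (-((5:ℝ)/2))
    - (n:ℝ)/2 * (ε ^ 2 + t) ^ (-((3:ℝ)/2))
noncomputable def psi2 (n : ℕ) (ε t : ℝ) : ℝ :=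
  (3 * (n:ℝ)/4 + 3) * (ε ^ 2 + t) ^ (-((5:ℝ)/2)) - 15/4 * t * (ε ^ 2 + t) ^ (-((7:ℝ)/2))

lemma hasDerivAt_shift_rpow {ε : ℝ} (hε : 0 < ε) (p t : ℝ) (ht : 0 ≤ t) :
    HasDerivAt (fun s => (ε ^ 2 + s) ^ p) (p * (ε ^ 2 + t) ^ (p - 1)) t := by
  have h : (0:ℝ) < ε ^ 2 + t := by positivity
  have := ((hasDerivAt_id t).const_add (ε ^ 2)).rpow_const (p := p) (Or.inl h.ne')
  simpa using this

lemma hd_phi0 {ε : ℝ} (hε : 0 < ε) : ∀ t, 0 ≤ t → HasDerivAt (phi0 ε) (phi1 ε t) t := by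
  intro t ht
  have h := hasDerivAt_shift_rpow hε ((1:ℝ)/2) t ht
  rw [show (1:ℝ)/2 - 1 = -((1:ℝ)/2) by norm_num] at h
  exact h

lemma hd_phi1 {ε : ℝ} (hε : 0 < ε) : ∀ t, 0 ≤ t → HasDerivAt (phi1 ε) (phi2 ε t) t := by
  intro t ht
  have h := (hasDerivAt_shift_rpow hε (-((1:ℝ)/2)) t ht).const_mul (1/2 : ℝ)
  rw [show -((1:ℝ)/2) - 1 = -((3:ℝ)/2) by norm_num] at h
  refine h.congr_deriv ?_
  unfold phi2; ring

lemma hd_psi0 {ε : ℝ} (hε : 0 < ε) (n : ℕ) :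
    ∀ t, 0 ≤ t → HasDerivAt (psi0 n ε) (psi1 n ε t) t := by
  intro t ht
  have hA : HasDerivAt (fun s => 4 * phi2 ε s)
      (4 * (-(1/4) * (-((3:ℝ)/2) * (ε ^ 2 + t) ^ (-((5:ℝ)/2))))) t := by
    have h := ((hasDerivAt_shift_rpow hε (-((3:ℝ)/2)) t ht).const_mul (-(1/4) : ℝ)).const_mul
      (4 : ℝ)
    rw [show -((3:ℝ)/2) - 1 = -((5:ℝ)/2) by norm_num] at h
    exact h
  have hC := hA.mul (hasDerivAt_id t)
  have hB : HasDerivAt (fun s => 2 * (n:ℝ) * phi1 ε s) (2 * (n:ℝ) * phi2 ε t) t :=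
    (hd_phi1 hε t ht).const_mul _
  refine (hC.add hB).congr_deriv ?_
  simp only [psi1, phi2, phi1, id_eq]; ring

lemma hd_psi1 {ε : ℝ} (hε : 0 < ε) (n : ℕ) :
    ∀ t, 0 ≤ t → HasDerivAt (psi1 n ε) (psi2 n ε t) t := by
  intro t ht
  have h3 := hasDerivAt_shift_rpow hε (-((3:ℝ)/2)) t ht
  have h5 := hasDerivAt_shift_rpow hε (-((5:ℝ)/2)) t ht
  rw [show -((3:ℝ)/2) - 1 = -((5:ℝ)/2) by norm_num] at h3
  rw [show -((5:ℝ)/2) - 1 = -((7:ℝ)/2) by norm_num] at h5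
  have hmul := ((hasDerivAt_id t).const_mul (3/2 : ℝ)).mul h5
  have total := (h3.neg.add hmul).sub (h3.const_mul ((n:ℝ)/2))
  refine total.congr_deriv ?_
  simp only [psi2, id_eq]; ring

lemma final_alg (n : ℕ) {ε s : ℝ} (hu : 0 < ε ^ 2 + s) :
    -(4 * psi2 n ε s * s + 2 * n * psi1 n ε s)
      = ((n:ℝ) - 1) * ((n:ℝ) - 3) / (ε ^ 2 + s) ^ ((3:ℝ)/2)
        + 6 * ((n:ℝ) - 3) * ε ^ 2 / (ε ^ 2 + s) ^ ((5:ℝ)/2)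
        + 15 * ε ^ 4 / (ε ^ 2 + s) ^ ((7:ℝ)/2) := by
  have e3 : (ε ^ 2 + s) ^ (-((3:ℝ)/2))
      = (ε ^ 2 + s) ^ 2 * (ε ^ 2 + s) ^ (-((7:ℝ)/2)) := by
    rw [show -((3:ℝ)/2) = ((2:ℕ):ℝ) + -((7:ℝ)/2) by norm_num, Real.rpow_add hu,
      Real.rpow_natCast]
  have e5 : (ε ^ 2 + s) ^ (-((5:ℝ)/2))
      = (ε ^ 2 + s) * (ε ^ 2 + s) ^ (-((7:ℝ)/2)) := by
    rw [show -((5:ℝ)/2) = (1:ℝ) + -((7:ℝ)/2) by norm_num, Real.rpow_add hu, Real.rpow_one]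
  have d : ∀ (X p : ℝ), X / (ε ^ 2 + s) ^ p = X * (ε ^ 2 + s) ^ (-p) := fun X p => by
    rw [Real.rpow_neg hu.le, div_eq_mul_inv]
  rw [d _ ((3:ℝ)/2), d _ ((5:ℝ)/2), d _ ((7:ℝ)/2)]
  simp only [psi1, psi2, e3, e5]
  ring

theorem stmt_1 (n : ℕ) (hn : 3 ≤ n) (ε : ℝ) (hε : 0 < ε)
    (a : EuclideanSpace ℝ (Fin n) → ℝ)
    (ha : ∀ x, a x = Real.sqrt (ε ^ 2 + ‖x‖ ^ 2)) :
    ∀ x : EuclideanSpace ℝ (Fin n),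
      (-laplacian (fun y => laplacian a y) x
        = ((n : ℝ) - 1) * ((n : ℝ) - 3) / (ε ^ 2 + ‖x‖ ^ 2) ^ ((3 : ℝ) / 2)
          + 6 * ((n : ℝ) - 3) * ε ^ 2 / (ε ^ 2 + ‖x‖ ^ 2) ^ ((5 : ℝ) / 2)
          + 15 * ε ^ 4 / (ε ^ 2 + ‖x‖ ^ 2) ^ ((7 : ℝ) / 2))
      ∧ 0 ≤ -laplacian (fun y => laplacian a y) x := by
  intro x
  have hu : (0:ℝ) < ε ^ 2 + ‖x‖ ^ 2 := by positivity
  have ha' : a = fun y => phi0 ε (‖y‖ ^ 2) := by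
    funext y; rw [ha y, phi0, Real.sqrt_eq_rpow]
  have hlap : (fun y => laplacian a y) = fun y => psi0 n ε (‖y‖ ^ 2) := by
    funext y
    rw [ha', lap_formula (phi0 ε) (phi1 ε) (phi2 ε) (hd_phi0 hε) (hd_phi1 hε) y]
    rfl
  have E : -laplacian (fun y => laplacian a y) x
      = ((n : ℝ) - 1) * ((n : ℝ) - 3) / (ε ^ 2 + ‖x‖ ^ 2) ^ ((3 : ℝ) / 2)
        + 6 * ((n : ℝ) - 3) * ε ^ 2 / (ε ^ 2 + ‖x‖ ^ 2) ^ ((5 : ℝ) / 2)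
        + 15 * ε ^ 4 / (ε ^ 2 + ‖x‖ ^ 2) ^ ((7 : ℝ) / 2) := by
    rw [hlap, lap_formula (psi0 n ε) (psi1 n ε) (psi2 n ε) (hd_psi0 hε n) (hd_psi1 hε n) x]
    exact final_alg n hu
  refine ⟨E, ?_⟩
  rw [E]
  have hn3 : (3:ℝ) ≤ (n:ℝ) := by exact_mod_cast hn
  have hn1 : (0:ℝ) ≤ (n:ℝ) - 3 := by linarith
  have hn2 : (0:ℝ) ≤ (n:ℝ) - 1 := by linarith
  apply add_nonneg (add_nonneg ?_ ?_) ?_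
  · exact div_nonneg (mul_nonneg hn2 hn1) (Real.rpow_nonneg hu.le _)
  · exact div_nonneg (by positivity) (Real.rpow_nonneg hu.le _)
  · exact div_nonneg (by positivity) (Real.rpow_nonneg hu.le _)
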